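/- arXiv:1604.06513 — 3 statements merged into one kernel-verified Lean document; each statement's English description precedes it below -/
import Mathlib

section
/- For every odd natural number n ≥ 1, there exists a 2-coloring of the edges of K_{2n-1} with no monochromatic copy of the star S_n; hence r(S_n) ≥ 2n for odd n. (The coloring: on vertices {0,...,2n-2}, color edge {i, i+j mod (2n-1)} blue for j ∈ {1,...,(n-1)/2} and red otherwise, giving every vertex blue degree and red degree exactly n-1.) -/
open SimpleGraph

/-- The graph of edges of color `b` in the 2-coloring `c` of a complete graph. -/
def colorGraph {V : Type*} (c : Sym2 V → Bool) (b : Bool) : SimpleGraph V :=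
  SimpleGraph.fromRel (fun u v => c s(u, v) = b)

/-- `G` occurs as a (not nec. induced) subgraph of `H`. -/
def ContainsCopy {V W : Type*} (G : SimpleGraph V) (H : SimpleGraph W) : Prop :=
  ∃ f : V → W, Function.Injective f ∧ ∀ ⦃u v : V⦄, G.Adj u v → H.Adj (f u) (f v)

/-- The coloring `c` contains a monochromatic copy of `G`. -/
def HasMonoCopy {V W : Type*} (G : SimpleGraph V) (c : Sym2 W → Bool) : Prop :=
  ∃ b : Bool, ContainsCopy G (colorGraph c b)

/-- The (diagonal) Ramsey number of a graph `G`. -/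
noncomputable def ramseyNumber {V : Type*} (G : SimpleGraph V) : ℕ :=
  sInf {r : ℕ | ∀ c : Sym2 (Fin r) → Bool, HasMonoCopy G c}

/-- The star `S n = K_{1,n}`: center `0`, `n` leaves. -/
def starGraph (n : ℕ) : SimpleGraph (Fin (n + 1)) :=
  SimpleGraph.fromRel (fun u v => u = 0)

/-- The bistar `B(m,n)`: adjacent centers `inl 0`, `inl 1`, with `m` resp. `n` leaves. -/
def bistar (m n : ℕ) : SimpleGraph (Fin 2 ⊕ Fin m ⊕ Fin n) :=
  SimpleGraph.fromRel (fun u v =>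
    (u = Sum.inl 0 ∧ v = Sum.inl 1) ∨
    (u = Sum.inl 0 ∧ ∃ i, v = Sum.inr (Sum.inl i)) ∨
    (u = Sum.inl 1 ∧ ∃ j, v = Sum.inr (Sum.inr j)))

/-!
Work on `ZMod (4k+1)` and colour `{i, j}` blue iff `i - j ≡ ±1, …, ±k`. The blue graph is a
circulant graph, hence `2k`-regular, and the red graph is its complement on `4k+1` vertices, hence
also `2k`-regular; so no vertex has `n = 2k+1` edges of one colour. For the Ramsey number, note that
`ramseyNumber` is an `sInf` that would be `0` on an empty set: it is attained because in any
colouring of a complete graph on at least `2n` vertices, the `2n - 1` edges at a vertex contain `n`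
of one colour.
-/

lemma colorGraph_adj {V : Type*} {c : Sym2 V → Bool} {b : Bool} {u v : V} :
    (colorGraph c b).Adj u v ↔ u ≠ v ∧ c s(u, v) = b := by
  simp [colorGraph, Sym2.eq_swap]

instance {V : Type*} [DecidableEq V] (c : Sym2 V → Bool) (b : Bool) :
    DecidableRel (colorGraph c b).Adj :=
  fun _ _ => decidable_of_iff' _ colorGraph_adj

lemma colorGraph_not {V : Type*} (c : Sym2 V → Bool) (b : Bool) :
    colorGraph c (!b) = (colorGraph c b)ᶜ := by
  ext u v
  simp only [colorGraph_adj, compl_adj, ne_eq]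
  cases b <;> cases c s(u, v) <;> simp

def edgeIndicator {V : Type*} (G : SimpleGraph V) [DecidableRel G.Adj] : Sym2 V → Bool :=
  fun e => decide (e ∈ G.edgeSet)

lemma colorGraph_edgeIndicator_true {V : Type*} (G : SimpleGraph V) [DecidableRel G.Adj] :
    colorGraph (edgeIndicator G) true = G := by
  ext u v
  simp only [colorGraph_adj, edgeIndicator, decide_eq_true_eq, mem_edgeSet]
  exact ⟨And.right, fun h => ⟨h.ne, h⟩⟩

lemma containsCopy_iff_isContained {V W : Type*} (G : SimpleGraph V) (H : SimpleGraph W) :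
    ContainsCopy G H ↔ G ⊑ H :=
  ⟨fun ⟨f, hf, hadj⟩ => ⟨⟨⟨f, fun h => hadj h⟩, hf⟩⟩,
    fun ⟨f⟩ => ⟨f, f.injective, fun _ _ h => f.toHom.map_adj h⟩⟩

theorem containsCopy_starGraph_iff {W : Type*} [Fintype W] (H : SimpleGraph W)
    [DecidableRel H.Adj] (n : ℕ) : ContainsCopy (_root_.starGraph n) H ↔ ∃ v, n ≤ H.degree v := by
  classical
  rw [containsCopy_iff_isContained]
  constructor
  · rintro ⟨f⟩
    refine ⟨f 0, ?_⟩
    have hcenter : (_root_.starGraph n).degree 0 = n := by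
      -- `_root_.starGraph n` is Mathlib's `SimpleGraph.starGraph 0` on `Fin (n + 1)`.
      have := degree_starGraph_center (V := Fin (n + 1)) (r := 0)
      simp only [Fintype.card_fin, add_tsub_cancel_right] at this
      convert this
      rfl
    simpa [hcenter] using f.degree_le 0
  · rintro ⟨v, hv⟩
    obtain ⟨t, htv, rfl⟩ := Finset.exists_subset_card_eq hv
    let g : Fin t.card → W := fun i => t.equivFin.symm i
    have hg : ∀ i, H.Adj v (g i) := fun i =>
      (mem_neighborFinset _ _ _).mp (htv (t.equivFin.symm i).2)
    refine ⟨⟨⟨Fin.cons v g, fun {i j} hij => ?_⟩, ?_⟩⟩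
    · obtain ⟨hne, rfl | rfl⟩ := hij
      · obtain ⟨j, rfl⟩ := Fin.exists_succ_eq.mpr hne.symm
        exact hg j
      · obtain ⟨i, rfl⟩ := Fin.exists_succ_eq.mpr hne
        exact (hg i).symm
    · have hvg : v ∉ Set.range g := by
        rintro ⟨i, hi⟩
        exact (hg i).ne hi.symm
      exact Fin.cons_injective_iff.mpr
        ⟨hvg, fun i j h => t.equivFin.symm.injective (Subtype.ext h)⟩

theorem HasMonoCopy.of_comp_sym2Map {V W W' : Type*} {G : SimpleGraph V} {c : Sym2 W' → Bool}
    {e : W → W'} (he : Function.Injective e) (h : HasMonoCopy G (c ∘ Sym2.map e)) :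
    HasMonoCopy G c := by
  obtain ⟨b, f, hf, hadj⟩ := h
  refine ⟨b, e ∘ f, he.comp hf, fun u v huv => ?_⟩
  obtain ⟨hne, hcol⟩ := colorGraph_adj.mp (hadj huv)
  exact colorGraph_adj.mpr ⟨he.ne hne, hcol⟩

theorem hasMonoCopy_starGraph_iff {W : Type*} [Fintype W] [DecidableEq W] (c : Sym2 W → Bool)
    (n : ℕ) : HasMonoCopy (_root_.starGraph n) c ↔ ∃ b v, n ≤ (colorGraph c b).degree v := by
  simp only [HasMonoCopy, containsCopy_starGraph_iff]

lemma degree_colorGraph_true_add_false {W : Type*} [Fintype W] [DecidableEq W]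
    (c : Sym2 W → Bool) (v : W) :
    (colorGraph c true).degree v + (colorGraph c false).degree v = Fintype.card W - 1 := by
  have hfalse : (colorGraph c false).degree v = (colorGraph c true)ᶜ.degree v := by
    convert rfl using 2
    exact (colorGraph_not c true).symm
  have := (colorGraph c true).degree_lt_card_verts v
  rw [hfalse, degree_compl]
  omega

theorem hasMonoCopy_starGraph_of_two_mul_le_card {W : Type*} [Fintype W] [Nonempty W]
    (c : Sym2 W → Bool) {n : ℕ} (h : 2 * n ≤ Fintype.card W) :
    HasMonoCopy (_root_.starGraph n) c := by
  classical
  obtain ⟨v⟩ := ‹Nonempty W›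
  have := degree_colorGraph_true_add_false c v
  rw [hasMonoCopy_starGraph_iff]
  by_cases hv : n ≤ (colorGraph c true).degree v
  · exact ⟨true, v, hv⟩
  · exact ⟨false, v, by omega⟩

theorem not_hasMonoCopy_starGraph_edgeIndicator {W : Type*} [Fintype W] [DecidableEq W]
    (G : SimpleGraph W) [DecidableRel G.Adj] {d : ℕ} (hG : G.IsRegularOfDegree d)
    (hcard : Fintype.card W = 2 * d + 1) :
    ¬HasMonoCopy (_root_.starGraph (d + 1)) (edgeIndicator G) := by
  rw [hasMonoCopy_starGraph_iff]
  rintro ⟨b, v, hv⟩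
  have htrue : (colorGraph (edgeIndicator G) true).degree v = d := by
    convert hG v using 2
    exact colorGraph_edgeIndicator_true G
  have := degree_colorGraph_true_add_false (edgeIndicator G) v
  cases b <;> omega

theorem lt_ramseyNumber_of_not_hasMonoCopy {V : Type*} {G : SimpleGraph V}
    (hG : ∃ r, ∀ c : Sym2 (Fin r) → Bool, HasMonoCopy G c) {m : ℕ} {c : Sym2 (Fin m) → Bool}
    (hc : ¬HasMonoCopy G c) : m < ramseyNumber G :=
  lt_of_not_ge fun h => hc (.of_comp_sym2Map (Fin.castLE_injective h) (Nat.sInf_mem hG _))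

theorem isRegularOfDegree_circulantGraph {G : Type*} [AddGroup G] [Fintype G] [DecidableEq G]
    (s : Finset G) (hneg : ∀ x ∈ s, -x ∈ s) (hzero : (0 : G) ∉ s) :
    (circulantGraph (s : Set G)).IsRegularOfDegree s.card := by
  intro v
  have hnbr : (circulantGraph (s : Set G)).neighborFinset v = s.image (· + v) := by
    ext w
    have hsymm : v - w ∈ s ↔ w - v ∈ s :=
      ⟨fun h => by simpa using hneg _ h, fun h => by simpa using hneg _ h⟩
    have hne : w - v ∈ s → v ≠ w := fun h hvw => hzero (by simpa [hvw] using h)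
    simp only [mem_neighborFinset, circulantGraph_adj, Finset.mem_image]
    constructor
    · rintro ⟨-, h⟩
      exact ⟨w - v, h.elim hsymm.mp id, sub_add_cancel w v⟩
    · rintro ⟨x, hx, rfl⟩
      have hx' : x + v - v ∈ s := by rwa [add_sub_cancel_right]
      exact ⟨hne hx', Or.inr hx'⟩
  rw [← card_neighborFinset_eq_degree, hnbr,
    Finset.card_image_of_injective _ (add_left_injective v)]

noncomputable def centeredJumps (m k : ℕ) : Finset (ZMod m) :=
  ((Finset.Icc (-(k : ℤ)) k).erase 0).image (↑)

lemma neg_mem_centeredJumps {m k : ℕ} {x : ZMod m} (hx : x ∈ centeredJumps m k) :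
    -x ∈ centeredJumps m k := by
  obtain ⟨j, hj, rfl⟩ := Finset.mem_image.mp hx
  simp only [Finset.mem_erase, Finset.mem_Icc] at hj
  refine Finset.mem_image.mpr ⟨-j, ?_, by push_cast; rfl⟩
  simp only [Finset.mem_erase, Finset.mem_Icc]
  omega

lemma zero_notMem_centeredJumps {m k : ℕ} (hk : k < m) : (0 : ZMod m) ∉ centeredJumps m k := by
  simp only [centeredJumps, Finset.mem_image, Finset.mem_erase, Finset.mem_Icc, not_exists,
    not_and]
  intro j hj hjm
  rw [ZMod.intCast_zmod_eq_zero_iff_dvd] at hjm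
  exact hj.1 (Int.eq_zero_of_abs_lt_dvd hjm (by rw [abs_lt]; omega))

lemma card_centeredJumps {m k : ℕ} (hk : 2 * k < m) : (centeredJumps m k).card = 2 * k := by
  have hinj : Set.InjOn (Int.cast : ℤ → ZMod m) ((Finset.Icc (-(k : ℤ)) k).erase 0) := by
    intro i hi j hj hij
    simp only [Finset.coe_erase, Finset.coe_Icc, Set.mem_sdiff, Set.mem_Icc] at hi hj
    rw [ZMod.intCast_eq_intCast_iff_dvd_sub] at hij
    have := Int.eq_zero_of_abs_lt_dvd hij (by rw [abs_lt]; omega)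
    omega
  rw [centeredJumps, Finset.card_image_of_injOn hinj, Finset.card_erase_of_mem (by simp),
    Int.card_Icc]
  omega

theorem exists_coloring_not_hasMonoCopy_starGraph (k : ℕ) :
    ∃ c : Sym2 (ZMod (4 * k + 1)) → Bool, ¬HasMonoCopy (_root_.starGraph (2 * k + 1)) c := by
  have hreg := isRegularOfDegree_circulantGraph (centeredJumps (4 * k + 1) k)
    (fun _ => neg_mem_centeredJumps) (zero_notMem_centeredJumps (by omega))
  rw [card_centeredJumps (by omega)] at hreg
  exact ⟨_, not_hasMonoCopy_starGraph_edgeIndicator _ hreg (by simp; ring)⟩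

theorem star_ramsey_lower_odd_general (n : ℕ) (hodd : Odd n) :
    (∃ c : Sym2 (Fin (2 * n - 1)) → Bool, ¬ HasMonoCopy (_root_.starGraph n) c) ∧
    2 * n ≤ ramseyNumber (_root_.starGraph n) := by
  obtain ⟨k, rfl⟩ := hodd
  obtain ⟨c, hc⟩ := exists_coloring_not_hasMonoCopy_starGraph k
  let e : Fin (2 * (2 * k + 1) - 1) ≃ ZMod (4 * k + 1) := Fintype.equivOfCardEq (by simp; omega)
  have hc' : ¬HasMonoCopy (_root_.starGraph (2 * k + 1)) (c ∘ Sym2.map e) :=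
    fun h => hc (h.of_comp_sym2Map e.injective)
  have hfinite : ∃ r, ∀ c : Sym2 (Fin r) → Bool, HasMonoCopy (_root_.starGraph (2 * k + 1)) c :=
    ⟨2 * (2 * k + 1) + 1, fun c => hasMonoCopy_starGraph_of_two_mul_le_card c (by simp)⟩
  have hramsey := lt_ramseyNumber_of_not_hasMonoCopy hfinite hc'
  exact ⟨⟨_, hc'⟩, by omega⟩

theorem star_ramsey_lower_odd (n : ℕ) (hn : 1 ≤ n) (hodd : Odd n) :
    (∃ c : Sym2 (Fin (2 * n - 1)) → Bool, ¬ HasMonoCopy (_root_.starGraph n) c) ∧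
    2 * n ≤ ramseyNumber (_root_.starGraph n) :=
  star_ramsey_lower_odd_general n hodd
end

section
/- Let m, n ∈ ℕ and R ≥ 2m+n+2. In any 2-coloring of the edges of K_R, if some vertex v has at least m+n+1 incident edges of one color, then K_R contains a monochromatic copy of the bistar B(m,n). -/
open SimpleGraph

/-- Build a monochromatic bistar from explicit data: two adjacent centers `x` (with
leaf set `A` of size `m`) and `y` (with leaf set `B` of size `n`). -/
lemma buildBistar {m n R : ℕ} (c : Sym2 (Fin R) → Bool) (col : Bool)
    (x y : Fin R) (hxy : x ≠ y) (A B : Finset (Fin R))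
    (hA : A.card = m) (hB : B.card = n) (hAB : Disjoint A B)
    (hxA : x ∉ A) (hyA : y ∉ A) (hxB : x ∉ B) (hyB : y ∉ B)
    (hcxy : c s(x, y) = col)
    (hcA : ∀ a ∈ A, c s(x, a) = col)
    (hcB : ∀ b ∈ B, c s(y, b) = col) :
    HasMonoCopy (bistar m n) c := by
  refine ⟨col, ?_⟩
  let eA := A.equivFinOfCardEq hA
  let eB := B.equivFinOfCardEq hB
  let f : Fin 2 ⊕ Fin m ⊕ Fin n → Fin R :=
    Sum.elim (![x, y]) (Sum.elim (fun i => (eA.symm i : Fin R)) (fun j => (eB.symm j : Fin R)))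
  have hfA : ∀ i, (eA.symm i : Fin R) ∈ A := fun i => (eA.symm i).2
  have hfB : ∀ j, (eB.symm j : Fin R) ∈ B := fun j => (eB.symm j).2
  have hAinj : ∀ i i', (eA.symm i : Fin R) = (eA.symm i' : Fin R) → i = i' := by
    intro i i' h
    have := Subtype.ext h
    exact eA.symm.injective this
  have hBinj : ∀ j j', (eB.symm j : Fin R) = (eB.symm j' : Fin R) → j = j' := by
    intro j j' h
    have := Subtype.ext h
    exact eB.symm.injective this
  have hADB : ∀ a ∈ A, ∀ b ∈ B, a ≠ b := fun a ha b hb =>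
    Finset.disjoint_left.mp hAB ha ∘ (· ▸ hb)
  have hinj : Function.Injective f := by
    rintro (i | (i | i)) (i' | (i' | i')) h <;>
      simp only [f, Sum.elim_inl, Sum.elim_inr] at h
    · congr 1
      fin_cases i <;> fin_cases i' <;> simp_all
    · exfalso; fin_cases i <;> simp at h
      · exact hxA (h ▸ hfA i')
      · exact hyA (h ▸ hfA i')
    · exfalso; fin_cases i <;> simp at h
      · exact hxB (h ▸ hfB i')
      · exact hyB (h ▸ hfB i')
    · exfalso; fin_cases i' <;> simp at h
      · exact hxA (h ▸ hfA i)
      · exact hyA (h ▸ hfA i)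
    · exact congrArg (Sum.inr ∘ Sum.inl) (hAinj i i' h)
    · exact absurd h (hADB _ (hfA i) _ (hfB i'))
    · exfalso; fin_cases i' <;> simp at h
      · exact hxB (h ▸ hfB i)
      · exact hyB (h ▸ hfB i)
    · exact absurd h.symm (hADB _ (hfA i') _ (hfB i))
    · exact congrArg (Sum.inr ∘ Sum.inr) (hBinj i i' h)
  refine ⟨f, hinj, ?_⟩
  intro u w hadj
  rw [bistar, SimpleGraph.fromRel_adj] at hadj
  obtain ⟨hne, hrel⟩ := hadj
  have hfne : f u ≠ f w := fun h => hne (hinj h)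
  have key : c s(f u, f w) = col ∨ c s(f w, f u) = col := by
    rcases hrel with (⟨h1, h2⟩ | ⟨h1, i, h2⟩ | ⟨h1, j, h2⟩) |
        (⟨h1, h2⟩ | ⟨h1, i, h2⟩ | ⟨h1, j, h2⟩) <;> subst h1 <;> subst h2 <;>
      simp only [f, Sum.elim_inl, Sum.elim_inr, Matrix.cons_val_zero, Matrix.cons_val_one,
        Matrix.head_cons]
    · exact Or.inl hcxy
    · exact Or.inl (hcA _ (hfA i))
    · exact Or.inl (hcB _ (hfB j))
    · exact Or.inr hcxy
    · exact Or.inr (hcA _ (hfA i))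
    · exact Or.inr (hcB _ (hfB j))
  rw [colorGraph, SimpleGraph.fromRel_adj]
  exact ⟨hfne, key⟩

theorem max_color_degree_bistar (m n R : ℕ) (hR : 2 * m + n + 2 ≤ R)
    (c : Sym2 (Fin R) → Bool) (v : Fin R)
    (hdeg : ∃ b : Bool,
      m + n + 1 ≤ (Finset.univ.filter (fun u : Fin R => u ≠ v ∧ c s(v, u) = b)).card) :
    HasMonoCopy (bistar m n) c := by
  classical
  obtain ⟨b, hb⟩ := hdeg
  set Nb : Fin R → Bool → Finset (Fin R) :=
    fun x col => Finset.univ.filter (fun u : Fin R => u ≠ x ∧ c s(x, u) = col) with hNb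
  -- membership characterization
  have hmem : ∀ x col u, u ∈ Nb x col ↔ u ≠ x ∧ c s(x, u) = col := by
    intro x col u
    simp [hNb]
  -- degree sum
  have hsum : ∀ x : Fin R, (Nb x b).card + (Nb x (!b)).card = R - 1 := by
    intro x
    have hdisj : Disjoint (Nb x b) (Nb x (!b)) := by
      rw [Finset.disjoint_left]
      intro u hu hu'
      rw [hmem] at hu hu'
      rw [hu.2] at hu'
      simp at hu'
    have hunion : Nb x b ∪ Nb x (!b) = Finset.univ.erase x := by
      ext u
      rw [Finset.mem_union, hmem, hmem, Finset.mem_erase]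
      constructor
      · rintro (h | h) <;> exact ⟨h.1, Finset.mem_univ u⟩
      · rintro ⟨h, -⟩
        rcases Bool.eq_or_eq_not (c s(x, u)) b with h' | h'
        · exact Or.inl ⟨h, h'⟩
        · exact Or.inr ⟨h, h'⟩
    have := Finset.card_union_of_disjoint hdisj
    rw [hunion, Finset.card_erase_of_mem (Finset.mem_univ x)] at this
    simpa using this.symm
  have hNv : m + n + 1 ≤ (Nb v b).card := hb
  clear_value Nb
  clear hb hNb
  by_cases hcase : ∃ u ∈ Nb v b, m + 1 ≤ (Nb u b).card
  · -- blue case: centers u (m leaves) and v (n leaves)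
    obtain ⟨u, huN, hu⟩ := hcase
    rw [hmem] at huN
    obtain ⟨huv, hcvu⟩ := huN
    -- A : m leaves of u, avoiding v
    obtain ⟨A, hAsub, hAcard⟩ := Finset.exists_subset_card_eq
      (show m ≤ ((Nb u b).erase v).card by
        rw [Finset.card_erase_of_mem]
        · omega
        · rw [hmem]; exact ⟨huv.symm, by rw [Sym2.eq_swap]; exact hcvu⟩)
    -- B : n leaves of v, avoiding u and A
    obtain ⟨B, hBsub, hBcard⟩ := Finset.exists_subset_card_eq
      (show n ≤ ((Nb v b) \ insert u A).card by
        have h1 : (insert u A).card ≤ m + 1 := by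
          calc (insert u A).card ≤ A.card + 1 := Finset.card_insert_le u A
          _ = m + 1 := by rw [hAcard]
        have h2 := Finset.card_sdiff_add_card (Nb v b) (insert u A)
        have h3 := Finset.card_union_le (Nb v b) (insert u A)
        have h4 : (Nb v b).card ≤ ((Nb v b) ∪ insert u A).card :=
          Finset.card_le_card Finset.subset_union_left
        omega)
    have hAsub' : A ⊆ Nb u b := hAsub.trans (Finset.erase_subset _ _)
    refine buildBistar c b u v huv A B hAcard hBcard ?_ ?_ ?_ ?_ ?_ ?_ ?_ ?_
    · rw [Finset.disjoint_left]
      intro a ha hab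
      exact (Finset.mem_sdiff.mp (hBsub hab)).2 (Finset.mem_insert_of_mem ha)
    · intro hu'
      exact ((hmem _ _ _).mp (hAsub' hu')).1 rfl
    · exact fun hv' => (Finset.mem_erase.mp (hAsub hv')).1 rfl
    · exact fun hu' => (Finset.mem_sdiff.mp (hBsub hu')).2 (Finset.mem_insert_self u A)
    · exact fun hv' => ((hmem _ _ _).mp (Finset.mem_sdiff.mp (hBsub hv')).1).1 rfl
    · rw [Sym2.eq_swap]; exact hcvu
    · exact fun a ha => ((hmem _ _ _).mp (hAsub' ha)).2
    · exact fun a ha => ((hmem _ _ _).mp (Finset.mem_sdiff.mp (hBsub ha)).1).2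
  · -- red case
    push_neg at hcase
    have hred : ∀ u ∈ Nb v b, m + n + 1 ≤ (Nb u (!b)).card := by
      intro u hu
      have h1 := hsum u
      have h2 := hcase u hu
      omega
    -- pick u in Nb v b
    have hNne : (Nb v b).Nonempty := Finset.card_pos.mp (by omega)
    obtain ⟨u, huN⟩ := hNne
    -- find w in Nb v b, red-adjacent to u
    have hw : ∃ w ∈ (Nb v b).erase u, c s(u, w) = !b := by
      by_contra hcon
      push_neg at hcon
      -- then all of (Nb v b).erase u are blue-neighbors of u, plus v itself
      have hsub : (Nb v b).erase u ⊆ (Nb u b).erase v := by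
        intro w hwmem
        obtain ⟨hwu, hwN⟩ := Finset.mem_erase.mp hwmem
        rw [hmem] at hwN
        have hcuw : c s(u, w) = b := by
          rcases Bool.eq_or_eq_not (c s(u, w)) b with h | h
          · exact h
          · exact absurd h (by intro hh; exact (hcon w hwmem hh).elim)
        rw [Finset.mem_erase, hmem]
        refine ⟨hwN.1, hwu, hcuw⟩
      have hvmem : v ∈ Nb u b := by
        rw [hmem]
        obtain ⟨huv, hcvu⟩ := (hmem _ _ _).mp huN
        exact ⟨huv.symm, by rw [Sym2.eq_swap]; exact hcvu⟩
      have h1 : ((Nb v b).erase u).card ≤ ((Nb u b).erase v).card :=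
        Finset.card_le_card hsub
      have h2 : ((Nb v b).erase u).card = (Nb v b).card - 1 :=
        Finset.card_erase_of_mem huN
      have h3 : ((Nb u b).erase v).card = (Nb u b).card - 1 :=
        Finset.card_erase_of_mem hvmem
      have h4 := hcase u huN
      have h5 : 1 ≤ (Nb u b).card := Finset.card_pos.mpr ⟨v, hvmem⟩
      omega
    obtain ⟨w, hwmem, hcuw⟩ := hw
    obtain ⟨hwu, hwN⟩ := Finset.mem_erase.mp hwmem
    -- B : n leaves of w (red), avoiding u
    obtain ⟨B, hBsub, hBcard⟩ := Finset.exists_subset_card_eq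
      (show n ≤ ((Nb w (!b)).erase u).card by
        have := hred w hwN
        rw [Finset.card_erase_of_mem]
        · omega
        · rw [hmem]
          refine ⟨hwu.symm, by rw [Sym2.eq_swap]; exact hcuw⟩)
    -- A : m leaves of u (red), avoiding w and B
    obtain ⟨A, hAsub, hAcard⟩ := Finset.exists_subset_card_eq
      (show m ≤ ((Nb u (!b)) \ insert w B).card by
        have h1 : (insert w B).card ≤ n + 1 := by
          calc (insert w B).card ≤ B.card + 1 := Finset.card_insert_le w B
          _ = n + 1 := by rw [hBcard]
        have h2 := Finset.card_sdiff_add_card (Nb u (!b)) (insert w B)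
        have h3 := Finset.card_union_le (Nb u (!b)) (insert w B)
        have h4 : (Nb u (!b)).card ≤ ((Nb u (!b)) ∪ insert w B).card :=
          Finset.card_le_card Finset.subset_union_left
        have := hred u huN
        omega)
    have hBsub' : B ⊆ Nb w (!b) := hBsub.trans (Finset.erase_subset _ _)
    have hAsub' : A ⊆ Nb u (!b) := hAsub.trans (Finset.sdiff_subset)
    refine buildBistar c (!b) u w (Ne.symm hwu) A B hAcard hBcard ?_ ?_ ?_ ?_ ?_ hcuw ?_ ?_
    · rw [Finset.disjoint_left]
      intro a ha hab
      exact (Finset.mem_sdiff.mp (hAsub ha)).2 (Finset.mem_insert_of_mem hab)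
    · exact fun hu' => ((hmem _ _ _).mp (hAsub' hu')).1 rfl
    · exact fun hw' => (Finset.mem_sdiff.mp (hAsub hw')).2 (Finset.mem_insert_self w B)
    · exact fun hu' => (Finset.mem_erase.mp (hBsub hu')).1 rfl
    · exact fun hw' => ((hmem _ _ _).mp (hBsub' hw')).1 rfl
    · exact fun a ha => ((hmem _ _ _).mp (hAsub' ha)).2
    · exact fun a ha => ((hmem _ _ _).mp (hBsub' ha)).2
end

section
/- For all n ≥ 3, every 2-coloring of the edges of K_{2n+3} contains a monochromatic copy of the bistar B(2,n); hence r(B(2,n)) ≤ 2n+3. -/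
open SimpleGraph

section Aux

variable {V : Type*} [Fintype V] [DecidableEq V]

/-- `b`-neighbors of `v` under coloring `c`. -/
private def nbr (c : Sym2 V → Bool) (b : Bool) (v : V) : Finset V :=
  Finset.univ.filter (fun w => w ≠ v ∧ c s(v, w) = b)

private lemma mem_nbr {c : Sym2 V → Bool} {b : Bool} {v w : V} :
    w ∈ nbr c b v ↔ w ≠ v ∧ c s(v, w) = b := by
  simp [nbr]

private lemma nbr_symm {c : Sym2 V → Bool} {b : Bool} {v w : V} :
    w ∈ nbr c b v ↔ v ∈ nbr c b w := by
  simp only [mem_nbr]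
  constructor
  · rintro ⟨h1, h2⟩; exact ⟨h1.symm, by rwa [Sym2.eq_swap]⟩
  · rintro ⟨h1, h2⟩; exact ⟨h1.symm, by rwa [Sym2.eq_swap]⟩

private lemma not_mem_nbr_self {c : Sym2 V → Bool} {b : Bool} {v : V} :
    v ∉ nbr c b v := by simp [mem_nbr]

private lemma nbr_card_add (c : Sym2 V → Bool) (v : V) :
    (nbr c false v).card + (nbr c true v).card = Fintype.card V - 1 := by
  have hdisj : Disjoint (nbr c false v) (nbr c true v) := by
    rw [Finset.disjoint_left]
    intro w h1 h2
    rw [mem_nbr] at h1 h2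
    simp [h1.2] at h2
  have hunion : nbr c false v ∪ nbr c true v = Finset.univ.erase v := by
    ext w
    simp only [Finset.mem_union, mem_nbr, Finset.mem_erase, Finset.mem_univ, and_true]
    rcases Bool.eq_false_or_eq_true (c s(v, w)) with h | h <;> simp [h]
  have := Finset.card_union_of_disjoint hdisj
  rw [hunion, Finset.card_erase_of_mem (Finset.mem_univ v), Finset.card_univ] at this
  omega

private lemma nbr_card_add' (c : Sym2 V → Bool) (b : Bool) (v : V) :
    (nbr c b v).card + (nbr c (!b) v).card = Fintype.card V - 1 := by
  cases b
  · simpa using nbr_card_add c v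
  · simpa [Nat.add_comm] using nbr_card_add c v

/-- If `w ∉ nbr c b v` and `w ≠ v` then the edge has the other color. -/
private lemma not_mem_nbr {c : Sym2 V → Bool} {b : Bool} {v w : V} (hne : w ≠ v)
    (h : w ∉ nbr c b v) : c s(v, w) = !b := by
  rw [mem_nbr] at h
  push_neg at h
  rcases Bool.eq_false_or_eq_true (c s(v, w)) with h' | h' <;> rcases b <;> simp_all

private lemma exists_inj_to (s : Finset V) (m : ℕ) (hs : s.card = m) :
    ∃ g : Fin m → V, Function.Injective g ∧ ∀ i, g i ∈ s := by
  subst hs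
  exact ⟨fun i => (s.equivFin.symm i : V),
    fun i j h => s.equivFin.symm.injective (Subtype.ext h),
    fun i => (s.equivFin.symm i).2⟩

private lemma embed_bistar (m n : ℕ) (c : Sym2 V → Bool) (b : Bool) (x y : V)
    (hxy : x ≠ y) (hb : c s(x, y) = b) (s t : Finset V)
    (hs : s.card = m) (ht : t.card = n) (hst : Disjoint s t)
    (hxs : x ∉ s) (hxt : x ∉ t) (hys : y ∉ s) (hyt : y ∉ t)
    (hsadj : ∀ a ∈ s, c s(x, a) = b) (htadj : ∀ a ∈ t, c s(y, a) = b) :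
    HasMonoCopy (bistar m n) c := by
  obtain ⟨g, hginj, hgs⟩ := exists_inj_to s m hs
  obtain ⟨h, hhinj, hht⟩ := exists_inj_to t n ht
  set f : Fin 2 ⊕ Fin m ⊕ Fin n → V := fun u =>
    match u with
    | Sum.inl 0 => x
    | Sum.inl 1 => y
    | Sum.inr (Sum.inl i) => g i
    | Sum.inr (Sum.inr j) => h j with hf
  have hdisj := Finset.disjoint_left.mp hst
  have hgx : ∀ i, g i ≠ x := fun i e => hxs (e ▸ hgs i)
  have hgy : ∀ i, g i ≠ y := fun i e => hys (e ▸ hgs i)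
  have hhx : ∀ j, h j ≠ x := fun j e => hxt (e ▸ hht j)
  have hhy : ∀ j, h j ≠ y := fun j e => hyt (e ▸ hht j)
  have hgh : ∀ i j, g i ≠ h j := fun i j e => hdisj (hgs i) (e ▸ hht j)
  have hinj : Function.Injective f := by
    rintro (u | u | u) (v | v | v) hfeq <;> simp only [hf] at hfeq
    · fin_cases u <;> fin_cases v <;> simp_all
    · fin_cases u
      · exact absurd hfeq.symm (hgx v)
      · exact absurd hfeq.symm (hgy v)
    · fin_cases u
      · exact absurd hfeq.symm (hhx v)
      · exact absurd hfeq.symm (hhy v)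
    · fin_cases v
      · exact absurd hfeq (hgx u)
      · exact absurd hfeq (hgy u)
    · exact congrArg (Sum.inr ∘ Sum.inl) (hginj hfeq)
    · exact absurd hfeq (hgh u v)
    · fin_cases v
      · exact absurd hfeq (hhx u)
      · exact absurd hfeq (hhy u)
    · exact absurd hfeq.symm (hgh v u)
    · exact congrArg (Sum.inr ∘ Sum.inr) (hhinj hfeq)
  refine ⟨b, f, hinj, ?_⟩
  intro u v huv
  rw [bistar, fromRel_adj] at huv
  obtain ⟨hne, hR⟩ := huv
  rw [colorGraph, fromRel_adj]
  refine ⟨fun e => hne (hinj e), ?_⟩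
  rcases hR with (⟨hu, hv⟩ | ⟨hu, i, hv⟩ | ⟨hu, j, hv⟩) |
      (⟨hv, hu⟩ | ⟨hv, i, hu⟩ | ⟨hv, j, hu⟩) <;> subst hu <;> subst hv <;>
    simp only [hf]
  · exact Or.inl hb
  · exact Or.inl (hsadj _ (hgs i))
  · exact Or.inl (htadj _ (hht j))
  · exact Or.inr hb
  · exact Or.inr (hsadj _ (hgs i))
  · exact Or.inr (htadj _ (hht j))

private lemma select_sets (n : ℕ) (A B : Finset V) (hA : 2 ≤ A.card) (hB : n ≤ B.card)
    (hU : n + 2 ≤ (A ∪ B).card) :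
    ∃ s t : Finset V, s ⊆ A ∧ t ⊆ B ∧ Disjoint s t ∧ s.card = 2 ∧ t.card = n := by
  by_cases h2 : 2 ≤ (A \ B).card
  · obtain ⟨s, hsub, hcard⟩ := Finset.exists_subset_card_eq h2
    obtain ⟨t, htsub, htcard⟩ := Finset.exists_subset_card_eq hB
    refine ⟨s, t, hsub.trans (Finset.sdiff_subset), htsub, ?_, hcard, htcard⟩
    exact Finset.disjoint_left.mpr fun a ha hat =>
      (Finset.mem_sdiff.mp (hsub ha)).2 (htsub hat)
  · push_neg at h2
    have hAsplit : (A \ B).card + (A ∩ B).card = A.card := Finset.card_sdiff_add_card_inter A B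
    have hcap : 2 - (A \ B).card ≤ (A ∩ B).card := by omega
    obtain ⟨e, hesub, hecard⟩ := Finset.exists_subset_card_eq hcap
    set s := (A \ B) ∪ e with hsdef
    have hse : Disjoint (A \ B) e := Finset.disjoint_left.mpr fun a ha hae =>
      (Finset.mem_sdiff.mp ha).2 (Finset.mem_inter.mp (hesub hae)).2
    have hscard : s.card = 2 := by
      rw [hsdef, Finset.card_union_of_disjoint hse, hecard]; omega
    have hsA : s ⊆ A := Finset.union_subset Finset.sdiff_subset
      (hesub.trans Finset.inter_subset_left)
    have hsB : s ∩ B = e := by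
      ext a
      simp only [hsdef, Finset.mem_inter, Finset.mem_union, Finset.mem_sdiff]
      constructor
      · rintro ⟨hav | hae, haB⟩
        · exact absurd haB hav.2
        · exact hae
      · intro hae
        exact ⟨Or.inr hae, (Finset.mem_inter.mp (hesub hae)).2⟩
    have hBs : n ≤ (B \ s).card := by
      have h1 := Finset.card_sdiff_add_card_inter B s
      have h2' := Finset.card_sdiff_add_card A B
      have h3 : B ∩ s = e := by rw [Finset.inter_comm]; exact hsB
      rw [h3, hecard] at h1
      omega
    obtain ⟨t, htsub, htcard⟩ := Finset.exists_subset_card_eq hBs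
    refine ⟨s, t, hsA, htsub.trans Finset.sdiff_subset, ?_, hscard, htcard⟩
    exact Finset.disjoint_right.mpr fun a hat has =>
      (Finset.mem_sdiff.mp (htsub hat)).2 has

/-- The main sufficient condition for finding a monochromatic bistar `B(2,n)`. -/
private lemma good_pair (n : ℕ) (c : Sym2 V → Bool) (b : Bool) (x y : V)
    (hxy : x ≠ y) (hc : c s(x, y) = b)
    (h1 : 2 ≤ ((nbr c b x).erase y).card)
    (h2 : n ≤ ((nbr c b y).erase x).card)
    (h3 : n + 2 ≤ (((nbr c b x).erase y) ∪ ((nbr c b y).erase x)).card) :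
    HasMonoCopy (bistar 2 n) c := by
  obtain ⟨s, t, hsA, htB, hst, hscard, htcard⟩ := select_sets n _ _ h1 h2 h3
  refine embed_bistar 2 n c b x y hxy hc s t hscard htcard hst ?_ ?_ ?_ ?_ ?_ ?_
  · exact fun hx => not_mem_nbr_self (Finset.mem_of_mem_erase (hsA hx))
  · exact fun hx => (Finset.ne_of_mem_erase (htB hx)) rfl
  · exact fun hy => (Finset.ne_of_mem_erase (hsA hy)) rfl
  · exact fun hy => not_mem_nbr_self (Finset.mem_of_mem_erase (htB hy))
  · exact fun a ha => (mem_nbr.mp (Finset.mem_of_mem_erase (hsA ha))).2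
  · exact fun a ha => (mem_nbr.mp (Finset.mem_of_mem_erase (htB ha))).2

end Aux

private lemma card_nbr_sum (n : ℕ) (c : Sym2 (Fin (2 * n + 3)) → Bool) (b : Bool)
    (v : Fin (2 * n + 3)) : (nbr c b v).card + (nbr c (!b) v).card = 2 * n + 2 := by
  have := nbr_card_add' c b v
  simpa using this

private lemma main_mono (n : ℕ) (hn : 3 ≤ n) (c : Sym2 (Fin (2 * n + 3)) → Bool) :
    HasMonoCopy (bistar 2 n) c := by
  by_cases hbig : ∃ b v, n + 3 ≤ (nbr c b v).card
  · obtain ⟨b, v, hv⟩ := hbig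
    by_cases hA1 : ∃ u ∈ nbr c b v, 3 ≤ (nbr c b u).card
    · -- u has b-degree ≥ 3, v has b-degree ≥ n+3: centers u (small) and v (big)
      obtain ⟨u, hu, h3u⟩ := hA1
      obtain ⟨huv, hcvu⟩ := mem_nbr.mp hu
      have hvu : v ∈ nbr c b u := nbr_symm.mp hu
      apply good_pair n c b u v huv (by rwa [Sym2.eq_swap])
      · rw [Finset.card_erase_of_mem hvu]; omega
      · rw [Finset.card_erase_of_mem hu]; omega
      · calc n + 2 ≤ ((nbr c b v).erase u).card := by
              rw [Finset.card_erase_of_mem hu]; omega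
          _ ≤ _ := Finset.card_le_card Finset.subset_union_right
    · -- all b-neighbors of v have b-degree ≤ 2; switch to color !b
      push_neg at hA1
      have hne : (nbr c b v).Nonempty := Finset.card_pos.mp (by omega)
      obtain ⟨u1, hu1⟩ := hne
      have hns : 0 < ((nbr c b v) \ (insert u1 (nbr c b u1))).card := by
        have h1 := Finset.le_card_sdiff (insert u1 (nbr c b u1)) (nbr c b v)
        have h2 : (insert u1 (nbr c b u1)).card ≤ 1 + (nbr c b u1).card := by
          apply le_trans (Finset.card_insert_le _ _); omega
        have h3 := hA1 u1 hu1
        omega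
      obtain ⟨u2, hu2⟩ := Finset.card_pos.mp hns
      rw [Finset.mem_sdiff, Finset.mem_insert, not_or] at hu2
      obtain ⟨hu2v, hu2ne, hu2nb⟩ := hu2
      have hc12 : c s(u1, u2) = !b := not_mem_nbr hu2ne hu2nb
      have hd1 : 2 * n ≤ (nbr c (!b) u1).card := by
        have := card_nbr_sum n c b u1
        have := hA1 u1 hu1
        omega
      have hd2 : 2 * n ≤ (nbr c (!b) u2).card := by
        have := card_nbr_sum n c b u2
        have := hA1 u2 hu2v
        omega
      have h21 : u2 ≠ u1 := hu2ne
      apply good_pair n c (!b) u2 u1 h21 (by rwa [Sym2.eq_swap])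
      · have := Finset.pred_card_le_card_erase (s := nbr c (!b) u2) (a := u1)
        omega
      · have := Finset.pred_card_le_card_erase (s := nbr c (!b) u1) (a := u2)
        omega
      · calc n + 2 ≤ ((nbr c (!b) u1).erase u2).card := by
              have := Finset.pred_card_le_card_erase (s := nbr c (!b) u1) (a := u2)
              omega
          _ ≤ _ := Finset.card_le_card Finset.subset_union_right
  · push_neg at hbig
    have hbig' : ∀ b v, (nbr c b v).card ≤ n + 2 := fun b v => by
      have := hbig b v; omega
    have hlow : ∀ b v, n ≤ (nbr c b v).card := fun b v => by
      have h1 := card_nbr_sum n c b v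
      have h2 := hbig' (!b) v
      omega
    by_cases hB1 : ∃ b y, n + 2 ≤ (nbr c b y).card
    · obtain ⟨b, y, hy⟩ := hB1
      have hycard : (nbr c b y).card = n + 2 := le_antisymm (hbig' b y) hy
      by_cases hB1a : ∃ x ∈ nbr c b y, ∃ z ∈ nbr c b x, z ∉ nbr c b y ∧ z ≠ y
      · obtain ⟨x, hx, z, hz, hzS, hzy⟩ := hB1a
        obtain ⟨hxy, _⟩ := mem_nbr.mp hx
        have hyx : y ∈ nbr c b x := nbr_symm.mp hx
        apply good_pair n c b x y hxy (by
          have := (mem_nbr.mp hyx).2; exact this)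
        · rw [Finset.card_erase_of_mem hyx]
          have := hlow b x
          omega
        · rw [Finset.card_erase_of_mem hx]; omega
        · have hzx : z ≠ x := fun e => not_mem_nbr_self (e ▸ hz)
          have hsub : insert z ((nbr c b y).erase x) ⊆
              ((nbr c b x).erase y) ∪ ((nbr c b y).erase x) := by
            apply Finset.insert_subset
            · exact Finset.mem_union_left _ (Finset.mem_erase.mpr ⟨hzy, hz⟩)
            · exact Finset.subset_union_right
          have hcard : (insert z ((nbr c b y).erase x)).card = n + 2 := by
            rw [Finset.card_insert_of_notMem (fun hmem => hzS (Finset.mem_of_mem_erase hmem)),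
              Finset.card_erase_of_mem hx, hycard]
            omega
          calc n + 2 = _ := hcard.symm
            _ ≤ _ := Finset.card_le_card hsub
      · -- contradiction: find a vertex of too-small degree
        exfalso
        push_neg at hB1a
        have hSy : y ∉ nbr c b y := not_mem_nbr_self
        have hbigset : (insert y (nbr c b y)).card = n + 3 := by
          rw [Finset.card_insert_of_notMem hSy, hycard]
        have : (insert y (nbr c b y))ᶜ.Nonempty := by
          rw [← Finset.card_pos, Finset.card_compl, hbigset]
          simp only [Fintype.card_fin]
          omega
        obtain ⟨w, hw⟩ := this
        rw [Finset.mem_compl, Finset.mem_insert, not_or] at hw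
        obtain ⟨hwy, hwS⟩ := hw
        have hsub : nbr c b w ⊆ (insert w (insert y (nbr c b y)))ᶜ := by
          intro z hz
          rw [Finset.mem_compl, Finset.mem_insert, Finset.mem_insert, not_or, not_or]
          obtain ⟨hzw, hczw⟩ := mem_nbr.mp hz
          refine ⟨hzw, ?_, ?_⟩
          · rintro rfl
            exact hwS (nbr_symm.mp hz)
          · intro hzS
            have hwz : w ∈ nbr c b z := nbr_symm.mp hz
            rcases (fun h => hB1a z hzS w hwz h) with h
            · by_cases hws : w ∈ nbr c b y
              · exact hwS hws
              · exact hwy (h hws)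
        have hcard1 : (insert w (insert y (nbr c b y))).card = n + 4 := by
          rw [Finset.card_insert_of_notMem (by
            rw [Finset.mem_insert, not_or]; exact ⟨hwy, hwS⟩), hbigset]
        have hcard2 := Finset.card_le_card hsub
        rw [Finset.card_compl, hcard1] at hcard2
        simp only [Fintype.card_fin] at hcard2
        have := hlow b w
        omega
    · -- all degrees are exactly n+1 in both colors
      push_neg at hB1
      have hdeg : ∀ b v, (nbr c b v).card = n + 1 := by
        intro b v
        have h1 := card_nbr_sum n c b v
        have h2 := hB1 b v
        have h3 := hB1 (!b) v
        omega
      by_contra hno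
      -- no good pair: unions of edge-neighborhoods are small
      have hkey : ∀ (b : Bool) (x y : Fin (2 * n + 3)), x ≠ y → c s(x, y) = b →
          (((nbr c b x).erase y) ∪ ((nbr c b y).erase x)).card ≤ n + 1 := by
        intro b x y hxy hcb
        by_contra hbig2
        push_neg at hbig2
        apply hno
        have hyx : y ∈ nbr c b x := mem_nbr.mpr ⟨hxy.symm, hcb⟩
        have hxmem : x ∈ nbr c b y := nbr_symm.mp hyx
        apply good_pair n c b x y hxy hcb
        · rw [Finset.card_erase_of_mem hyx, hdeg]; omega
        · rw [Finset.card_erase_of_mem hxmem, hdeg]; omega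
        · omega
      -- codegree bound in color true for every pair
      have hcodeg : ∀ x y : Fin (2 * n + 3), x ≠ y →
          n - 1 ≤ ((nbr c true x) ∩ (nbr c true y)).card := by
        intro x y hxy
        cases hcxy : c s(x, y) with
        | true =>
          have hk := hkey true x y hxy hcxy
          have hyx : y ∈ nbr c true x := mem_nbr.mpr ⟨hxy.symm, hcxy⟩
          have hxin : x ∈ nbr c true y := nbr_symm.mp hyx
          have hA : ((nbr c true x).erase y).card = n := by
            rw [Finset.card_erase_of_mem hyx, hdeg]; omega
          have hB : ((nbr c true y).erase x).card = n := by
            rw [Finset.card_erase_of_mem hxin, hdeg]; omega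
          have hu := Finset.card_union_add_card_inter ((nbr c true x).erase y)
            ((nbr c true y).erase x)
          have hsub : ((nbr c true x).erase y) ∩ ((nbr c true y).erase x) ⊆
              nbr c true x ∩ nbr c true y :=
            Finset.inter_subset_inter (Finset.erase_subset _ _) (Finset.erase_subset _ _)
          have := Finset.card_le_card hsub
          omega
        | false =>
          have hk := hkey false x y hxy hcxy
          have hsub : (insert x (insert y (((nbr c false x).erase y) ∪
              ((nbr c false y).erase x))))ᶜ ⊆ nbr c true x ∩ nbr c true y := by
            intro z hz
            rw [Finset.mem_compl, Finset.mem_insert, Finset.mem_insert, not_or, not_or,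
              Finset.mem_union, not_or] at hz
            obtain ⟨hzx, hzy, hzF1, hzF2⟩ := hz
            have hz1 : z ∉ nbr c false x := fun h => hzF1 (Finset.mem_erase.mpr ⟨hzy, h⟩)
            have hz2 : z ∉ nbr c false y := fun h => hzF2 (Finset.mem_erase.mpr ⟨hzx, h⟩)
            have ht1 : c s(x, z) = true := by simpa using not_mem_nbr hzx hz1
            have ht2 : c s(y, z) = true := by simpa using not_mem_nbr hzy hz2
            exact Finset.mem_inter.mpr ⟨mem_nbr.mpr ⟨hzx, ht1⟩, mem_nbr.mpr ⟨hzy, ht2⟩⟩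
          have hcard := Finset.card_le_card hsub
          rw [Finset.card_compl] at hcard
          have hle : (insert x (insert y (((nbr c false x).erase y) ∪
              ((nbr c false y).erase x)))).card ≤ n + 3 := by
            calc _ ≤ (insert y (((nbr c false x).erase y) ∪
                  ((nbr c false y).erase x))).card + 1 := Finset.card_insert_le _ _
              _ ≤ (((nbr c false x).erase y) ∪ ((nbr c false y).erase x)).card + 1 + 1 := by
                  have := Finset.card_insert_le y (((nbr c false x).erase y) ∪
                    ((nbr c false y).erase x))
                  omega
              _ ≤ n + 3 := by omega
          simp only [Fintype.card_fin] at hcard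
          omega
      -- double counting of codegrees
      set N : Fin (2 * n + 3) → Finset (Fin (2 * n + 3)) := nbr c true with hN
      have hsum1 : ∀ x y : Fin (2 * n + 3), (N x ∩ N y).card
          = ∑ z : Fin (2 * n + 3), if x ∈ N z ∧ y ∈ N z then 1 else 0 := by
        intro x y
        rw [← Finset.card_filter]
        congr 1
        ext z
        simp only [Finset.mem_inter, Finset.mem_filter, Finset.mem_univ, true_and, hN]
        rw [@nbr_symm _ _ _ c true z x, @nbr_symm _ _ _ c true z y]
      have hsum2 : ∑ p ∈ Finset.univ.offDiag, (N p.1 ∩ N p.2).card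
          = ∑ z : Fin (2 * n + 3), ((N z).offDiag).card := by
        have : ∑ p ∈ Finset.univ.offDiag, (N p.1 ∩ N p.2).card
            = ∑ p ∈ Finset.univ.offDiag, ∑ z : Fin (2 * n + 3),
                if p.1 ∈ N z ∧ p.2 ∈ N z then 1 else 0 :=
          Finset.sum_congr rfl (fun p _ => hsum1 p.1 p.2)
        rw [this, Finset.sum_comm]
        apply Finset.sum_congr rfl
        intro z _
        rw [← Finset.card_filter]
        congr 1
        ext p
        simp only [Finset.mem_filter, Finset.mem_offDiag, Finset.mem_univ, true_and]
        tauto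
      have hlb : ((Finset.univ : Finset (Fin (2 * n + 3))).offDiag).card * (n - 1)
          ≤ ∑ p ∈ Finset.univ.offDiag, (N p.1 ∩ N p.2).card := by
        rw [← smul_eq_mul]
        apply Finset.card_nsmul_le_sum
        intro p hp
        rw [Finset.mem_offDiag] at hp
        exact hcodeg p.1 p.2 hp.2.2
      have hub : ∑ z : Fin (2 * n + 3), ((N z).offDiag).card = (2 * n + 3) * ((n + 1) * n) := by
        have h1 : ∀ z : Fin (2 * n + 3), ((N z).offDiag).card = (n + 1) * n := by
          intro z
          rw [Finset.offDiag_card, hN, hdeg]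
          have : (n + 1) * (n + 1) = (n + 1) * n + (n + 1) := by ring
          omega
        rw [Finset.sum_congr rfl (fun z _ => h1 z), Finset.sum_const, Finset.card_univ,
          Fintype.card_fin, smul_eq_mul]
      have hodc : ((Finset.univ : Finset (Fin (2 * n + 3))).offDiag).card
          = (2 * n + 3) * (2 * n + 2) := by
        rw [Finset.offDiag_card, Finset.card_univ, Fintype.card_fin]
        have : (2 * n + 3) * (2 * n + 3) = (2 * n + 3) * (2 * n + 2) + (2 * n + 3) := by ring
        omega
      rw [hsum2, hub, hodc] at hlb
      have hnk : n - 1 = (n - 3) + 2 := by omega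
      have hn3 : n = (n - 3) + 3 := by omega
      set k := n - 3
      rw [hnk, hn3] at hlb
      have key : (2*(k+3)+3) * (2*(k+3)+2) * (k+2)
          = (2*(k+3)+3) * ((k+3+1) * (k+3)) + (2*k+9) * (k*k + 5*k + 4) := by ring
      rw [key] at hlb
      have hpos : 0 < (2*k+9) * (k*k + 5*k + 4) := by positivity
      exact absurd hlb (Nat.not_le.mpr (Nat.lt_add_of_pos_right hpos))

theorem bistar_two_n_ramsey_upper (n : ℕ) (hn : 3 ≤ n) :
    (∀ c : Sym2 (Fin (2 * n + 3)) → Bool, HasMonoCopy (bistar 2 n) c) ∧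
    ramseyNumber (bistar 2 n) ≤ 2 * n + 3 := by
  refine ⟨fun c => main_mono n hn c, ?_⟩
  exact Nat.sInf_le (fun c => main_mono n hn c)
end
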